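/- For the quadratic entropy F(s) = (1/2)(s - 1)² with reverse entropy R(s) = s·F(1/s), and for r₁, r₂ > 0 and c ≥ 0, the lower semicontinuous relaxation of inf_{θ>0} θ·(R(r₁/θ) + R(r₂/θ) + c) equals (1/(2(r₁ + r₂)))·((r₁ - r₂)² + h(c)·r₁·r₂), where h(c) = c(4 - c) for 0 ≤ c ≤ 2 and h(c) = 4 for c ≥ 2. -/
import Mathlib


open Real

/-- The quadratic entropy `F(s) = (1/2)(s-1)²`. -/
noncomputable def Fquad : ℝ → ℝ := fun s => (1 / 2) * (s - 1) ^ 2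

/-- Its reverse entropy `R(s) = s·F(1/s)` (for `s > 0`). -/
noncomputable def Rquad : ℝ → ℝ := fun s => s * Fquad (1 / s)

/-- Marginal perspective function of the quadratic entropy: for `r₁, r₂ > 0`, `c ≥ 0`,
`inf_{θ>0} θ(R(r₁/θ) + R(r₂/θ) + c) = (1/(2(r₁+r₂)))·((r₁-r₂)² + h(c) r₁ r₂)` with
`h(c) = c(4-c)` for `c ≤ 2` and `h(c) = 4` for `c ≥ 2`. -/
theorem quadratic_marginal_perspective (r₁ r₂ c : ℝ) (h₁ : 0 < r₁) (h₂ : 0 < r₂)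
    (hc : 0 ≤ c) :
    IsGLB {y : ℝ | ∃ θ : ℝ, 0 < θ ∧ y = θ * (Rquad (r₁ / θ) + Rquad (r₂ / θ) + c)}
      ((1 / (2 * (r₁ + r₂))) *
        ((r₁ - r₂) ^ 2 + (if c ≤ 2 then c * (4 - c) else 4) * r₁ * r₂)) := by
  have hS : (0:ℝ) < r₁ + r₂ := by positivity
  have key : ∀ θ : ℝ, 0 < θ → θ * (Rquad (r₁ / θ) + Rquad (r₂ / θ) + c)
      = ((r₁ + r₂) / (2 * r₁ * r₂)) * θ ^ 2 + (c - 2) * θ + (r₁ + r₂) / 2 := by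
    intro θ hθ
    simp only [Rquad, Fquad]
    field_simp
    ring
  constructor
  · rintro y ⟨θ, hθ, rfl⟩
    rw [key θ hθ]
    split_ifs with h
    · have hdiff : ((r₁ + r₂) / (2 * r₁ * r₂)) * θ ^ 2 + (c - 2) * θ + (r₁ + r₂) / 2
          - (1 / (2 * (r₁ + r₂))) * ((r₁ - r₂) ^ 2 + c * (4 - c) * r₁ * r₂)
          = ((r₁ + r₂) / (2 * r₁ * r₂)) * (θ - (2 - c) * r₁ * r₂ / (r₁ + r₂)) ^ 2 := by
        field_simp; ring
      nlinarith [mul_nonneg (le_of_lt (div_pos hS (by positivity : (0:ℝ) < 2 * r₁ * r₂)))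
        (sq_nonneg (θ - (2 - c) * r₁ * r₂ / (r₁ + r₂)))]
    · push_neg at h
      have hM : (1 / (2 * (r₁ + r₂))) * ((r₁ - r₂) ^ 2 + 4 * r₁ * r₂) = (r₁ + r₂) / 2 := by
        field_simp; ring
      rw [hM]
      have ha : (0:ℝ) ≤ ((r₁ + r₂) / (2 * r₁ * r₂)) * θ ^ 2 := by positivity
      have hb2 : (0:ℝ) ≤ (c - 2) * θ := mul_nonneg (by linarith) hθ.le
      linarith
  · intro b hb
    have hb' : ∀ θ : ℝ, 0 < θ →
        b ≤ ((r₁ + r₂) / (2 * r₁ * r₂)) * θ ^ 2 + (c - 2) * θ + (r₁ + r₂) / 2 := by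
      intro θ hθ
      have := hb ⟨θ, hθ, rfl⟩
      rwa [key θ hθ] at this
    by_cases h2 : c < 2
    · have hif : c ≤ 2 := h2.le
      rw [if_pos hif]
      set θ₀ : ℝ := (2 - c) * r₁ * r₂ / (r₁ + r₂) with hθ₀
      have hθ₀pos : 0 < θ₀ := by
        exact div_pos (mul_pos (mul_pos (by linarith) h₁) h₂) hS
      have := hb' θ₀ hθ₀pos
      have hval : ((r₁ + r₂) / (2 * r₁ * r₂)) * θ₀ ^ 2 + (c - 2) * θ₀ + (r₁ + r₂) / 2
          = (1 / (2 * (r₁ + r₂))) * ((r₁ - r₂) ^ 2 + c * (4 - c) * r₁ * r₂) := by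
        rw [hθ₀]; field_simp; ring
      linarith [hval ▸ this]
    · push_neg at h2
      have hM : (1 / (2 * (r₁ + r₂))) *
          ((r₁ - r₂) ^ 2 + (if c ≤ 2 then c * (4 - c) else 4) * r₁ * r₂) = (r₁ + r₂) / 2 := by
        split_ifs with h
        · have hc2 : c = 2 := le_antisymm h h2
          subst hc2; field_simp; ring
        · field_simp; ring
      rw [hM]
      have hcont : ContinuousOn
          (fun θ : ℝ => ((r₁ + r₂) / (2 * r₁ * r₂)) * θ ^ 2 + (c - 2) * θ + (r₁ + r₂) / 2)
          (Set.Ici 0) := by fun_prop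
      have htend : Filter.Tendsto
          (fun θ : ℝ => ((r₁ + r₂) / (2 * r₁ * r₂)) * θ ^ 2 + (c - 2) * θ + (r₁ + r₂) / 2)
          (nhdsWithin 0 (Set.Ioi 0)) (nhds ((r₁ + r₂) / 2)) := by
        have hcont2 : Continuous
            (fun θ : ℝ => ((r₁ + r₂) / (2 * r₁ * r₂)) * θ ^ 2 + (c - 2) * θ + (r₁ + r₂) / 2) := by
          fun_prop
        have := (hcont2.tendsto 0).mono_left (nhdsWithin_le_nhds (s := Set.Ioi (0:ℝ)))
        simpa using this
      refine ge_of_tendsto htend ?_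
      filter_upwards [self_mem_nhdsWithin] with θ hθ
      exact hb' θ hθ
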